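/- Let A and B be unital associative k-algebras and let R : B ⊗ A → A ⊗ B be a linear map satisfying R(1 ⊗ a) = a ⊗ 1, R(b ⊗ 1) = 1 ⊗ b, and the two compatibility conditions R∘(μ_B ⊗ A) = (A ⊗ μ_B)∘(R ⊗ B)∘(B ⊗ R) and R∘(B ⊗ μ_A) = (μ_A ⊗ B)∘(A ⊗ R)∘(R ⊗ A). Then the vector space A ⊗ B equipped with the multiplication (a ⊗ b)(a' ⊗ b') := a·(ᴿa') ⊗ (bᴿ)·b' (where R(b ⊗ a') = ᴿa' ⊗ bᴿ in Sweedler-type notation) and unit 1 ⊗ 1 is a unital associative algebra. -/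
import Mathlib


open TensorProduct

namespace Smash

variable (k : Type) [Field k] (A B : Type) [Ring A] [Algebra k A] [Ring B] [Algebra k B]

/-- The multiplication `(a ⊗ b)(a' ⊗ b') = a (ᴿa') ⊗ (bᴿ) b'` on `A ⊗ B` induced by a
twisting map `R : B ⊗ A → A ⊗ B`. -/
noncomputable def smashMul (R : B ⊗[k] A →ₗ[k] A ⊗[k] B) :
    (A ⊗[k] B) ⊗[k] (A ⊗[k] B) →ₗ[k] A ⊗[k] B :=
  TensorProduct.map (LinearMap.mul' k A) (LinearMap.mul' k B) ∘ₗ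
    (TensorProduct.assoc k A A (B ⊗[k] B)).symm.toLinearMap ∘ₗ
    LinearMap.lTensor A (TensorProduct.assoc k A B B).toLinearMap ∘ₗ
    LinearMap.lTensor A (LinearMap.rTensor B R) ∘ₗ
    LinearMap.lTensor A (TensorProduct.assoc k B A B).symm.toLinearMap ∘ₗ
    (TensorProduct.assoc k A B ((A ⊗[k] B))).toLinearMap

/-- `R` is compatible with the units. -/
def UnitCond (R : B ⊗[k] A →ₗ[k] A ⊗[k] B) : Prop :=
  (∀ a : A, R ((1 : B) ⊗ₜ[k] a) = a ⊗ₜ[k] (1 : B)) ∧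
  (∀ b : B, R (b ⊗ₜ[k] (1 : A)) = (1 : A) ⊗ₜ[k] b)

/-- `R` is compatible with the multiplication of `B`:
`R ∘ (μ_B ⊗ A) = (A ⊗ μ_B) ∘ (R ⊗ B) ∘ (B ⊗ R)`. -/
def MulBCond (R : B ⊗[k] A →ₗ[k] A ⊗[k] B) : Prop :=
  ∀ (b b' : B) (a : A),
    R ((b * b') ⊗ₜ[k] a) =
      (LinearMap.lTensor A (LinearMap.mul' k B))
        ((TensorProduct.assoc k A B B)
          ((LinearMap.rTensor B R)
            ((TensorProduct.assoc k B A B).symm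
              ((LinearMap.lTensor B R) (b ⊗ₜ[k] (b' ⊗ₜ[k] a))))))

/-- `R` is compatible with the multiplication of `A`:
`R ∘ (B ⊗ μ_A) = (μ_A ⊗ B) ∘ (A ⊗ R) ∘ (R ⊗ A)`. -/
def MulACond (R : B ⊗[k] A →ₗ[k] A ⊗[k] B) : Prop :=
  ∀ (b : B) (a a' : A),
    R (b ⊗ₜ[k] (a * a')) =
      (LinearMap.rTensor B (LinearMap.mul' k A))
        ((TensorProduct.assoc k A A B).symm
          ((LinearMap.lTensor A R)
            ((TensorProduct.assoc k A B A)
              ((LinearMap.rTensor A R) ((b ⊗ₜ[k] a) ⊗ₜ[k] a')))))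

/-- A distributive law (twisting map). -/
def IsDistrLaw (R : B ⊗[k] A →ₗ[k] A ⊗[k] B) : Prop :=
  UnitCond k A B R ∧ MulBCond k A B R ∧ MulACond k A B R

end Smash
set_option maxHeartbeats 1000000
set_option synthInstance.maxHeartbeats 400000

section Aux

open TensorProduct Smash

variable (k : Type) [Field k] (A B : Type) [Ring A] [Algebra k A] [Ring B] [Algebra k B]

lemma smashMul_tmul (R : B ⊗[k] A →ₗ[k] A ⊗[k] B) (a a' : A) (b b' : B) :
    smashMul k A B R ((a ⊗ₜ[k] b) ⊗ₜ[k] (a' ⊗ₜ[k] b')) =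
      TensorProduct.map (LinearMap.mulLeft k a) (LinearMap.mulRight k b') (R (b ⊗ₜ[k] a')) := by
  rw [smashMul]
  simp only [LinearMap.comp_apply, LinearEquiv.coe_coe, assoc_tmul, LinearMap.lTensor_tmul,
    assoc_symm_tmul, LinearMap.rTensor_tmul]
  induction R (b ⊗ₜ[k] a') using TensorProduct.induction_on with
  | zero => simp
  | tmul x y =>
      simp [LinearMap.mul'_apply]
  | add u v hu hv =>
      simp only [add_tmul, tmul_add, map_add, hu, hv]

end Aux
section Aux2

open TensorProduct Smash

variable (k : Type) [Field k] (A B : Type) [Ring A] [Algebra k A] [Ring B] [Algebra k B]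

lemma smash_lemL (R : B ⊗[k] A →ₗ[k] A ⊗[k] B) (hB : MulBCond k A B R)
    (a a'' : A) (b' b'' : B) (p : A ⊗[k] B) :
    smashMul k A B R
      ((TensorProduct.map (LinearMap.mulLeft k a) (LinearMap.mulRight k b') p) ⊗ₜ[k]
        (a'' ⊗ₜ[k] b'')) =
    TensorProduct.map (LinearMap.mulLeft k a) (LinearMap.mulRight k b'')
      (smashMul k A B R (p ⊗ₜ[k] R (b' ⊗ₜ[k] a''))) := by
  induction p using TensorProduct.induction_on with
  | zero => simp
  | add u v hu hv => simp only [map_add, add_tmul, hu, hv]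
  | tmul r₁ r₂ =>
    rw [map_tmul, smashMul_tmul, LinearMap.mulLeft_apply, LinearMap.mulRight_apply,
      hB r₂ b' a'']
    simp only [LinearMap.lTensor_tmul]
    induction R (b' ⊗ₜ[k] a'') using TensorProduct.induction_on with
    | zero => simp
    | add u v hu hv => simp only [tmul_add, map_add, hu, hv]
    | tmul t₁ t₂ =>
      rw [assoc_symm_tmul, LinearMap.rTensor_tmul, smashMul_tmul]
      induction R (r₂ ⊗ₜ[k] t₁) using TensorProduct.induction_on with
      | zero => simp
      | add u v hu hv => simp only [add_tmul, map_add, hu, hv]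
      | tmul u₁ u₂ =>
        simp [LinearMap.mul'_apply, mul_assoc]

lemma smash_lemM (R : B ⊗[k] A →ₗ[k] A ⊗[k] B) (hA : MulACond k A B R)
    (a a' : A) (b b'' : B) (q : A ⊗[k] B) :
    smashMul k A B R
      ((a ⊗ₜ[k] b) ⊗ₜ[k]
        (TensorProduct.map (LinearMap.mulLeft k a') (LinearMap.mulRight k b'') q)) =
    TensorProduct.map (LinearMap.mulLeft k a) (LinearMap.mulRight k b'')
      (smashMul k A B R (R (b ⊗ₜ[k] a') ⊗ₜ[k] q)) := by
  induction q using TensorProduct.induction_on with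
  | zero => simp
  | add u v hu hv => simp only [map_add, tmul_add, hu, hv]
  | tmul t₁ t₂ =>
    rw [map_tmul, smashMul_tmul, LinearMap.mulLeft_apply, LinearMap.mulRight_apply,
      hA b a' t₁]
    simp only [LinearMap.rTensor_tmul]
    induction R (b ⊗ₜ[k] a') using TensorProduct.induction_on with
    | zero => simp
    | add u v hu hv => simp only [add_tmul, map_add, hu, hv]
    | tmul r₁ r₂ =>
      rw [assoc_tmul, LinearMap.lTensor_tmul, smashMul_tmul]
      induction R (r₂ ⊗ₜ[k] t₁) using TensorProduct.induction_on with
      | zero => simp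
      | add u v hu hv => simp only [tmul_add, map_add, hu, hv]
      | tmul u₁ u₂ =>
        simp [LinearMap.mul'_apply, mul_assoc]

end Aux2
open TensorProduct Smash in
/-- If `R : B ⊗ A → A ⊗ B` is a distributive law, then `A ⊗ B` with the
multiplication `(a ⊗ b)(a' ⊗ b') = a (ᴿa') ⊗ (bᴿ) b'` and unit `1 ⊗ 1` is a unital
associative algebra. -/
theorem smash_biproduct_is_unital_associative
    (k : Type) [Field k] (A B : Type) [Ring A] [Algebra k A] [Ring B] [Algebra k B]
    (R : B ⊗[k] A →ₗ[k] A ⊗[k] B) (hR : IsDistrLaw k A B R) :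
    (∀ x y z : A ⊗[k] B,
        smashMul k A B R ((smashMul k A B R (x ⊗ₜ[k] y)) ⊗ₜ[k] z) =
          smashMul k A B R (x ⊗ₜ[k] (smashMul k A B R (y ⊗ₜ[k] z)))) ∧
    (∀ x : A ⊗[k] B, smashMul k A B R ((((1 : A) ⊗ₜ[k] (1 : B))) ⊗ₜ[k] x) = x) ∧
    (∀ x : A ⊗[k] B, smashMul k A B R (x ⊗ₜ[k] ((1 : A) ⊗ₜ[k] (1 : B))) = x) := by
  obtain ⟨⟨hu1, hu2⟩, hB, hA⟩ := hR
  refine ⟨?_, ?_, ?_⟩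
  · intro x y z
    induction x using TensorProduct.induction_on with
    | zero => simp
    | add u v hu hv => simp only [add_tmul, map_add, hu, hv]
    | tmul a b =>
      induction y using TensorProduct.induction_on with
      | zero => simp
      | add u v hu hv => simp only [add_tmul, tmul_add, map_add, hu, hv]
      | tmul a' b' =>
        induction z using TensorProduct.induction_on with
        | zero => simp
        | add u v hu hv => simp only [add_tmul, tmul_add, map_add, hu, hv]
        | tmul a'' b'' =>
          rw [smashMul_tmul, smash_lemL k A B R hB,
            smashMul_tmul k A B R a' a'' b' b'', smash_lemM k A B R hA]
  · intro x
    induction x using TensorProduct.induction_on with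
    | zero => simp
    | add u v hu hv => simp only [tmul_add, map_add, hu, hv]
    | tmul a b => rw [smashMul_tmul, hu1]; simp
  · intro x
    induction x using TensorProduct.induction_on with
    | zero => simp
    | add u v hu hv => simp only [add_tmul, map_add, hu, hv]
    | tmul a b => rw [smashMul_tmul, hu2]; simp
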